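/- arXiv:1103.4441 — 7 statements merged into one kernel-verified Lean document; each statement's English description precedes it below -/
import Mathlib

section
/- The maps σ and σ⁻¹ on ℤ⁴ are mutually inverse bijections: for every (a,b,c,d) ∈ ℤ⁴ one has ((a,b,c,d)·σ)·σ⁻¹ = (a,b,c,d) and ((a,b,c,d)·σ⁻¹)·σ = (a,b,c,d). -/
/-- For `x : ℤ`, `x⁺ = max x 0`. -/
def pPart (x : ℤ) : ℤ := max x 0

/-- For `x : ℤ`, `x⁻ = min x 0`. -/
def nPart (x : ℤ) : ℤ := min x 0

/-- The map `σ : ℤ⁴ → ℤ⁴`. -/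
def sigmaMap : ℤ × ℤ × ℤ × ℤ → ℤ × ℤ × ℤ × ℤ :=
  fun (a, b, c, d) =>
    let e := a - nPart b - c + pPart d
    (a + pPart b + pPart (pPart d - e), d - pPart e,
      c + nPart d + nPart (nPart b + e), b + pPart e)

/-- The map `σ⁻¹ : ℤ⁴ → ℤ⁴`. -/
def sigmaInvMap : ℤ × ℤ × ℤ × ℤ → ℤ × ℤ × ℤ × ℤ :=
  fun (a, b, c, d) =>
    let f := a + nPart b - c - pPart d
    (a - pPart b - pPart (pPart d + f), d + nPart f,
      c - nPart d - nPart (nPart b - f), b - nPart f)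

/-- The maps `σ` and `σ⁻¹` on `ℤ⁴` are mutually inverse bijections. -/
theorem sigma_sigmaInv_mutually_inverse :
    ∀ v : ℤ × ℤ × ℤ × ℤ, sigmaInvMap (sigmaMap v) = v ∧ sigmaMap (sigmaInvMap v) = v := by
  rintro ⟨a, b, c, d⟩
  constructor <;>
    · simp only [sigmaMap, sigmaInvMap, pPart, nPart, Prod.mk.injEq]
      refine ⟨?_, ?_, ?_, ?_⟩ <;> omega
end

section
/- The mixed relation holds for the action on ℤ⁶: for every v ∈ ℤ⁶, ((v·ρ₁)·ρ₂)·σ₁ = ((v·σ₂)·ρ₁)·ρ₂, where σ₂ applies σ to the last four coordinates, σ₁ applies σ to the first four coordinates, ρ₁ exchanges the first and second pairs of coordinates, and ρ₂ exchanges the second and third pairs of coordinates. -/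
/-- The map `ρ : ℤ⁴ → ℤ⁴`, `(a,b,c,d) ↦ (c,d,a,b)`. -/
def rhoMap : ℤ × ℤ × ℤ × ℤ → ℤ × ℤ × ℤ × ℤ :=
  fun (a, b, c, d) => (c, d, a, b)

/-- `σ₁` acting on `ℤ⁶`: apply `σ` to the first four coordinates. -/
def sigma1 : ℤ × ℤ × ℤ × ℤ × ℤ × ℤ → ℤ × ℤ × ℤ × ℤ × ℤ × ℤ :=
  fun (a₁, b₁, a₂, b₂, a₃, b₃) =>
    match sigmaMap (a₁, b₁, a₂, b₂) with
    | (x, y, z, w) => (x, y, z, w, a₃, b₃)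

/-- `σ₂` acting on `ℤ⁶`: apply `σ` to the last four coordinates. -/
def sigma2 : ℤ × ℤ × ℤ × ℤ × ℤ × ℤ → ℤ × ℤ × ℤ × ℤ × ℤ × ℤ :=
  fun (a₁, b₁, a₂, b₂, a₃, b₃) =>
    match sigmaMap (a₂, b₂, a₃, b₃) with
    | (x, y, z, w) => (a₁, b₁, x, y, z, w)

/-- `ρ₁` acting on `ℤ⁶`: exchange the first and second pairs of coordinates. -/
def rho1 : ℤ × ℤ × ℤ × ℤ × ℤ × ℤ → ℤ × ℤ × ℤ × ℤ × ℤ × ℤ :=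
  fun (a₁, b₁, a₂, b₂, a₃, b₃) => (a₂, b₂, a₁, b₁, a₃, b₃)

/-- `ρ₂` acting on `ℤ⁶`: exchange the second and third pairs of coordinates. -/
def rho2 : ℤ × ℤ × ℤ × ℤ × ℤ × ℤ → ℤ × ℤ × ℤ × ℤ × ℤ × ℤ :=
  fun (a₁, b₁, a₂, b₂, a₃, b₃) => (a₁, b₁, a₃, b₃, a₂, b₂)

/-- The mixed relation `ρ₁ ρ₂ σ₁ = σ₂ ρ₁ ρ₂` holds for the action on `ℤ⁶`. -/
theorem mixed_relation_on_Z6 (v : ℤ × ℤ × ℤ × ℤ × ℤ × ℤ) :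
    sigma1 (rho2 (rho1 v)) = rho2 (rho1 (sigma2 v)) := by
  obtain ⟨a₁, b₁, a₂, b₂, a₃, b₃⟩ := v
  rfl
end

section
/- The equivalent form of the mixed relation holds for the action on ℤ⁶: for every v ∈ ℤ⁶, ((v·ρ₂)·ρ₁)·σ₂ = ((v·σ₁)·ρ₂)·ρ₁, where σ₁ applies σ to the first four coordinates, σ₂ applies σ to the last four coordinates, ρ₁ exchanges the first and second pairs of coordinates, and ρ₂ exchanges the second and third pairs of coordinates. -/
/-- The equivalent form `ρ₂ ρ₁ σ₂ = σ₁ ρ₂ ρ₁` of the mixed relation holds for the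
action on `ℤ⁶`. -/
theorem mixed_relation_on_Z6' (v : ℤ × ℤ × ℤ × ℤ × ℤ × ℤ) :
    sigma2 (rho1 (rho2 v)) = rho1 (rho2 (sigma1 v)) := by
  obtain ⟨a₁, b₁, a₂, b₂, a₃, b₃⟩ := v
  rfl
end

section
/- The VB₂-action on ℤ⁴ is faithful: the group homomorphism from the free product ℤ * (ℤ/2ℤ) to the group of bijections of ℤ⁴, sending the generator of the free factor ℤ to the bijection σ and the generator of the free factor ℤ/2ℤ to the involution ρ, is injective. -/
open Cardinal Function Set Pointwise

namespace Monoid.Coprod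

universe u

variable {G H : Type u} [Group G] [Group H] {M : Type*} [Monoid M]

-- The ping-pong lemma for `G ∗ H` is transferred from the one for the `Bool`-indexed free
-- product with `true ↦ G`, `false ↦ H`.
instance instGroupCond : ∀ b : Bool, Group (cond b G H)
  | true => ‹Group G›
  | false => ‹Group H›

def condHom (f : G →* M) (g : H →* M) : ∀ b : Bool, cond b G H →* M
  | true => f
  | false => g

def toCoprodI : G ∗ H →* CoprodI fun b : Bool => cond b G H :=
  lift (CoprodI.of (M := fun b : Bool => cond b G H) (i := true))
    (CoprodI.of (M := fun b : Bool => cond b G H) (i := false))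

theorem lift_eq_coprodI_lift_comp (f : G →* M) (g : H →* M) :
    lift f g = (CoprodI.lift (condHom f g)).comp toCoprodI :=
  hom_ext (by ext; simp [toCoprodI, condHom]) (by ext; simp [toCoprodI, condHom])

theorem toCoprodI_injective : Injective (toCoprodI : G ∗ H →* _) := by
  have h := lift_eq_coprodI_lift_comp (M := G ∗ H) inl inr
  rw [lift_inl_inr] at h
  refine .of_comp (f := CoprodI.lift (condHom (M := G ∗ H) inl inr)) ?_
  rw [← MonoidHom.coe_comp, ← h]
  exact injective_id

theorem lift_injective_of_ping_pong {P α : Type*} [Group P] [MulAction P α]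
    (f : G →* P) (g : H →* P) (hcard : 3 ≤ #G ∨ 3 ≤ #H) {X Y : Set α}
    (hX : X.Nonempty) (hY : Y.Nonempty) (hXY : Disjoint X Y)
    (hf : ∀ a, a ≠ 1 → f a • Y ⊆ X) (hg : ∀ b, b ≠ 1 → g b • X ⊆ Y) :
    Injective (lift f g) := by
  rw [lift_eq_coprodI_lift_comp, MonoidHom.coe_comp]
  refine Injective.comp (CoprodI.lift_injective_of_ping_pong _ ?_ (fun b => cond b X Y) ?_ ?_ ?_)
    toCoprodI_injective
  · exact .inr (hcard.elim (⟨true, ·⟩) (⟨false, ·⟩))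
  · rintro (_ | _) <;> assumption
  · rintro (_ | _) (_ | _) hne <;> first | exact absurd rfl hne | exact hXY | exact hXY.symm
  · rintro (_ | _) (_ | _) hne <;> first | exact absurd rfl hne | exact hg | exact hf

end Monoid.Coprod

theorem Set.MapsTo.iterate_succ_of_mapsTo {α : Type*} {f : α → α} {s t : Set α}
    (hst : MapsTo f s t) (ht : MapsTo f t t) (n : ℕ) : MapsTo f^[n + 1] s t := by
  rw [iterate_succ]
  exact (ht.iterate n).comp hst

def sigmaPerm : Equiv.Perm (ℤ × ℤ × ℤ × ℤ) where
  toFun := sigmaMap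
  invFun := sigmaInvMap
  left_inv := fun ⟨a, b, c, d⟩ => by
    simp only [sigmaMap, sigmaInvMap, pPart, nPart, Prod.mk.injEq]; omega
  right_inv := fun ⟨a, b, c, d⟩ => by
    simp only [sigmaMap, sigmaInvMap, pPart, nPart, Prod.mk.injEq]; omega

def sigmaRegionPos : Set (ℤ × ℤ × ℤ × ℤ) := {v | let (a, b, c, d) := v; b < 0 ∧ 0 < d ∧ c < a}

def sigmaRegionNeg : Set (ℤ × ℤ × ℤ × ℤ) := {v | let (a, b, c, d) := v; b < 0 ∧ 0 < d ∧ a < c}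

def rhoRegion : Set (ℤ × ℤ × ℤ × ℤ) := {v | let (_, b, _, d) := v; d < 0 ∧ 0 < b}

theorem mapsTo_sigmaMap_rhoRegion : MapsTo sigmaMap rhoRegion sigmaRegionPos :=
  fun ⟨a, b, c, d⟩ h => by
    simp only [rhoRegion, sigmaRegionPos, sigmaMap, pPart, nPart, mem_ofPred_eq] at *; omega

theorem mapsTo_sigmaMap_sigmaRegionPos : MapsTo sigmaMap sigmaRegionPos sigmaRegionPos :=
  fun ⟨a, b, c, d⟩ h => by
    simp only [sigmaRegionPos, sigmaMap, pPart, nPart, mem_ofPred_eq] at *; omega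

theorem mapsTo_sigmaInvMap_rhoRegion : MapsTo sigmaInvMap rhoRegion sigmaRegionNeg :=
  fun ⟨a, b, c, d⟩ h => by
    simp only [rhoRegion, sigmaRegionNeg, sigmaInvMap, pPart, nPart, mem_ofPred_eq] at *; omega

theorem mapsTo_sigmaInvMap_sigmaRegionNeg : MapsTo sigmaInvMap sigmaRegionNeg sigmaRegionNeg :=
  fun ⟨a, b, c, d⟩ h => by
    simp only [sigmaRegionNeg, sigmaInvMap, pPart, nPart, mem_ofPred_eq] at *; omega

theorem mapsTo_rhoMap : MapsTo rhoMap (sigmaRegionPos ∪ sigmaRegionNeg) rhoRegion :=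
  fun ⟨a, b, c, d⟩ h => by
    simp only [rhoRegion, sigmaRegionPos, sigmaRegionNeg, rhoMap, mem_union,
      mem_ofPred_eq] at *
    omega

theorem disjoint_sigmaRegion_rhoRegion : Disjoint (sigmaRegionPos ∪ sigmaRegionNeg) rhoRegion :=
  disjoint_left.2 fun ⟨a, b, c, d⟩ hσ hρ => by
    simp only [rhoRegion, sigmaRegionPos, sigmaRegionNeg, mem_union, mem_ofPred_eq] at hσ hρ
    omega

theorem mapsTo_sigmaPerm_zpow {n : ℤ} (hn : n ≠ 0) :
    MapsTo ⇑(sigmaPerm ^ n) rhoRegion (sigmaRegionPos ∪ sigmaRegionNeg) := by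
  rcases n with (_ | n) | n
  · exact absurd rfl hn
  · rw [Int.ofNat_eq_natCast, zpow_natCast, Equiv.Perm.coe_pow]
    exact (mapsTo_sigmaMap_rhoRegion.iterate_succ_of_mapsTo
      mapsTo_sigmaMap_sigmaRegionPos n).mono_right subset_union_left
  · rw [zpow_negSucc, ← inv_pow, Equiv.Perm.coe_pow]
    exact (mapsTo_sigmaInvMap_rhoRegion.iterate_succ_of_mapsTo
      mapsTo_sigmaInvMap_sigmaRegionNeg n).mono_right subset_union_right

/-- The `VB₂`-action on `ℤ⁴` is faithful: the homomorphism from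
`VB₂ ≅ ℤ * (ℤ/2ℤ)` to the bijections of `ℤ⁴` sending the generator of the free
factor `ℤ` to the bijection `σ` and the generator of the free factor `ℤ/2ℤ` to the
involution `ρ` is injective. -/
theorem VB2_action_faithful
    (φ : Monoid.Coprod (Multiplicative ℤ) (Multiplicative (ZMod 2)) →*
        Equiv.Perm (ℤ × ℤ × ℤ × ℤ))
    (hσ : ∀ v, φ (Monoid.Coprod.inl (Multiplicative.ofAdd (1 : ℤ))) v = sigmaMap v)
    (hρ : ∀ v, φ (Monoid.Coprod.inr (Multiplicative.ofAdd (1 : ZMod 2))) v = rhoMap v) :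
    Function.Injective φ := by
  have hinl : φ.comp Monoid.Coprod.inl = zpowersHom _ sigmaPerm :=
    MonoidHom.ext_mint (Equiv.ext fun v => by simpa [sigmaPerm] using hσ v)
  have hinr : ∀ x : Multiplicative (ZMod 2), x ≠ 1 → x = Multiplicative.ofAdd 1 := by decide
  have hcard : 3 ≤ #(Multiplicative ℤ) := (natCast_lt_aleph0 (n := 3)).le.trans_eq mk_int.symm
  rw [Monoid.Coprod.lift_unique (fg := φ) rfl rfl]
  refine Monoid.Coprod.lift_injective_of_ping_pong _ _ (.inl hcard)
    ⟨(1, -1, 0, 1), by simp [sigmaRegionPos]⟩ ⟨(0, 1, 0, -1), by simp [rhoRegion]⟩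
    disjoint_sigmaRegion_rhoRegion (fun x hx => ?_) (fun x hx => ?_)
  · rw [hinl, zpowersHom_apply, smul_set_subset_iff]
    exact mapsTo_sigmaPerm_zpow (by simpa using hx)
  · rw [MonoidHom.comp_apply, hinr x hx, smul_set_subset_iff]
    intro v hv
    rw [Equiv.Perm.smul_def, hρ]
    exact mapsTo_rhoMap hv
end

section
/- For any two distinct positive integers x and y, the only element of VB₂ that fixes the vector (0,x,0,y) is the trivial one: if g ∈ ℤ * (ℤ/2ℤ) and the image of g under the homomorphism sending the generator of ℤ to σ and the generator of ℤ/2ℤ to ρ fixes (0,x,0,y) ∈ ℤ⁴, then g = 1. -/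
/-! Ping-pong. Every element of `ℤ ∗ ℤ/2` is the product of a reduced word alternating between
nonzero powers of `σ` and the letter `ρ`. Nonzero powers of `σ` map `XRho` into
`XSigma = XPlus ∪ XMinus`, `ρ` maps `XSigma` into `XRho`, and both `p = (0,x,0,y)` and `ρ p` lie
in `XRho`. So a nontrivial reduced word moves `p` into `XSigma` or, if it starts with `ρ`, into
`ρ (XSigma ∪ {p})`; neither contains `p`, the second one because `x ≠ y`. -/

open Monoid.Coprod Set

namespace Monoid.Coprod

variable {M N : Type*} [Monoid M] [Monoid N]

inductive WordHead
  | empty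
  | inl
  | inr

inductive ReducedWord : WordHead → M ∗ N → Prop
  | empty : ReducedWord .empty 1
  | inl_mul {m : M} {g : M ∗ N} {h : WordHead} (hm : m ≠ 1) (hg : ReducedWord h g)
      (hh : h ≠ .inl) : ReducedWord .inl (inl m * g)
  | inr_mul {n : N} {g : M ∗ N} {h : WordHead} (hn : n ≠ 1) (hg : ReducedWord h g)
      (hh : h ≠ .inr) : ReducedWord .inr (inr n * g)

theorem ReducedWord.eq_one {g : M ∗ N} (hg : ReducedWord .empty g) : g = 1 := by
  cases hg
  rfl

theorem ReducedWord.exists_inl_mul {h : WordHead} {g : M ∗ N} (hg : ReducedWord h g) (m : M) :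
    ∃ h', ReducedWord h' (inl m * g) := by
  by_cases hm : m = 1
  · exact ⟨h, by simpa [hm] using hg⟩
  by_cases hh : h = .inl
  · subst hh
    cases hg with
    | @inl_mul m' g' h' _ hg' hh' =>
      rw [← mul_assoc, ← map_mul]
      by_cases hmm' : m * m' = 1
      · exact ⟨h', by simpa [hmm'] using hg'⟩
      · exact ⟨_, .inl_mul hmm' hg' hh'⟩
  · exact ⟨_, .inl_mul hm hg hh⟩

theorem ReducedWord.exists_inr_mul {h : WordHead} {g : M ∗ N} (hg : ReducedWord h g) (n : N) :
    ∃ h', ReducedWord h' (inr n * g) := by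
  by_cases hn : n = 1
  · exact ⟨h, by simpa [hn] using hg⟩
  by_cases hh : h = .inr
  · subst hh
    cases hg with
    | @inr_mul n' g' h' _ hg' hh' =>
      rw [← mul_assoc, ← map_mul]
      by_cases hnn' : n * n' = 1
      · exact ⟨h', by simpa [hnn'] using hg'⟩
      · exact ⟨_, .inr_mul hnn' hg' hh'⟩
  · exact ⟨_, .inr_mul hn hg hh⟩

theorem exists_reducedWord (g : M ∗ N) : ∃ h, ReducedWord h g := by
  induction g using induction_on' with
  | one => exact ⟨_, .empty⟩
  | inl_mul m g ih => exact ih.elim fun _ hg ↦ hg.exists_inl_mul m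
  | inr_mul n g ih => exact ih.elim fun _ hg ↦ hg.exists_inr_mul n

end Monoid.Coprod

theorem Equiv.Perm.mapsTo_zpow {α : Type*} {s : Equiv.Perm α} {Y P Q : Set α}
    (hP : MapsTo s (Y ∪ P) P) (hQ : MapsTo ⇑s⁻¹ (Y ∪ Q) Q) {n : ℤ} (hn : n ≠ 0) :
    MapsTo ⇑(s ^ n) Y (P ∪ Q) := by
  obtain ⟨k, rfl | rfl⟩ : ∃ k : ℕ, n = k + 1 ∨ n = Int.negSucc k := by
    rcases n with (_ | k) | k
    · exact absurd rfl hn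
    · exact ⟨k, .inl rfl⟩
    · exact ⟨k, .inr rfl⟩
  · rw [← Nat.cast_succ, zpow_natCast, Equiv.Perm.coe_pow, Function.iterate_succ]
    exact (((hP.mono_left subset_union_right).iterate k).comp
      (hP.mono_left subset_union_left)).mono_right subset_union_left
  · rw [zpow_negSucc, ← inv_pow, Equiv.Perm.coe_pow, Function.iterate_succ]
    exact (((hQ.mono_left subset_union_right).iterate k).comp
      (hQ.mono_left subset_union_left)).mono_right subset_union_right

local notation "ℤ⁴" => ℤ × ℤ × ℤ × ℤ
local notation "VB₂" => Multiplicative ℤ ∗ Multiplicative (ZMod 2)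

def XPlus : Set ℤ⁴ := {(a, b, c, d) : ℤ⁴ | 0 < a ∧ b ≤ 0 ∧ c ≤ 0 ∧ 0 < d ∧ 0 < b + d}

def XMinus : Set ℤ⁴ := {(a, b, c, d) : ℤ⁴ | a < 0 ∧ b ≤ 0 ∧ 0 ≤ c ∧ 0 < d ∧ 0 < b + d}

def XSigma : Set ℤ⁴ := XPlus ∪ XMinus

def XRho : Set ℤ⁴ := rhoMap ⁻¹' XSigma ∪ {(a, b, c, d) : ℤ⁴ | a = 0 ∧ c = 0 ∧ 0 < b ∧ 0 < d}

theorem sigmaMap_sigmaInvMap (v : ℤ⁴) : sigmaMap (sigmaInvMap v) = v := by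
  obtain ⟨a, b, c, d⟩ := v
  simp only [sigmaMap, sigmaInvMap, pPart, nPart, Prod.mk.injEq]
  omega

theorem mapsTo_sigmaMap : MapsTo sigmaMap (XRho ∪ XPlus) XPlus := by
  rintro ⟨a, b, c, d⟩ h
  simp only [XRho, XSigma, XPlus, XMinus, mem_union, mem_preimage, mem_ofPred_eq, rhoMap,
    sigmaMap, pPart, nPart] at *
  omega

theorem mapsTo_sigmaInvMap : MapsTo sigmaInvMap (XRho ∪ XMinus) XMinus := by
  rintro ⟨a, b, c, d⟩ h
  simp only [XRho, XSigma, XPlus, XMinus, mem_union, mem_preimage, mem_ofPred_eq, rhoMap,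
    sigmaInvMap, pPart, nPart] at *
  omega

def pingPongRegion (p : ℤ⁴) : WordHead → Set ℤ⁴
  | .empty => {p}
  | .inl => XSigma
  | .inr => rhoMap ⁻¹' (XSigma ∪ {p})

theorem pingPongRegion_subset_XRho {p : ℤ⁴} (hp : p ∈ XRho) (hp' : rhoMap p ∈ XRho)
    {h : WordHead} (hh : h ≠ .inl) : pingPongRegion p h ⊆ XRho := by
  cases h with
  | empty => simpa [pingPongRegion] using hp
  | inl => exact absurd rfl hh
  | inr =>
    rintro v (hv | rfl : rhoMap v ∈ XSigma ∨ rhoMap v = p)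
    · exact .inl hv
    · exact hp'

theorem pingPongRegion_subset_XSigma_union {p : ℤ⁴} {h : WordHead} (hh : h ≠ .inr) :
    pingPongRegion p h ⊆ XSigma ∪ {p} := by
  cases h with
  | empty => exact subset_union_right
  | inl => exact subset_union_left
  | inr => exact absurd rfl hh

section Action

variable (φ : VB₂ →* Equiv.Perm ℤ⁴)

theorem coe_apply_inl_eq_zpow (m : Multiplicative ℤ) :
    ⇑(φ (inl m)) = ⇑(φ (inl (.ofAdd 1)) ^ m.toAdd) := by
  rw [← map_zpow, ← map_zpow, ← ofAdd_zsmul, smul_eq_mul, mul_one, ofAdd_toAdd]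

theorem mapsTo_apply_inl (hσ : ∀ v, φ (inl (.ofAdd 1)) v = sigmaMap v)
    {m : Multiplicative ℤ} (hm : m ≠ 1) : MapsTo (φ (inl m)) XRho XSigma := by
  have hσ' : ⇑(φ (inl (.ofAdd 1))) = sigmaMap := funext hσ
  have hσinv : ⇑(φ (inl (.ofAdd 1)))⁻¹ = sigmaInvMap := funext fun v ↦ by
    rw [Equiv.Perm.inv_eq_iff_eq, hσ, sigmaMap_sigmaInvMap]
  rw [coe_apply_inl_eq_zpow]
  refine Equiv.Perm.mapsTo_zpow (hσ' ▸ mapsTo_sigmaMap) (hσinv ▸ mapsTo_sigmaInvMap) ?_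
  simpa using hm

theorem apply_inr (hρ : ∀ v, φ (inr (.ofAdd 1)) v = rhoMap v)
    {n : Multiplicative (ZMod 2)} (hn : n ≠ 1) (v : ℤ⁴) : φ (inr n) v = rhoMap v := by
  obtain rfl : n = .ofAdd 1 := by revert n; decide
  exact hρ v

theorem apply_mem_pingPongRegion (hσ : ∀ v, φ (inl (.ofAdd 1)) v = sigmaMap v)
    (hρ : ∀ v, φ (inr (.ofAdd 1)) v = rhoMap v) {p : ℤ⁴} (hp : p ∈ XRho)
    (hp' : rhoMap p ∈ XRho) {h : WordHead} {g : VB₂} (hg : ReducedWord h g) :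
    φ g p ∈ pingPongRegion p h := by
  induction hg with
  | empty => simp [pingPongRegion]
  | inl_mul hm _ hh ih =>
    rw [map_mul, Equiv.Perm.mul_apply]
    exact mapsTo_apply_inl φ hσ hm (pingPongRegion_subset_XRho hp hp' hh ih)
  | inr_mul hn _ hh ih =>
    rw [map_mul, Equiv.Perm.mul_apply, apply_inr φ hρ hn]
    exact pingPongRegion_subset_XSigma_union hh ih

end Action

theorem mem_XRho {x y : ℤ} (hx : 0 < x) (hy : 0 < y) : (0, x, 0, y) ∈ XRho :=
  .inr ⟨rfl, rfl, hx, hy⟩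

theorem eq_empty_of_mem_pingPongRegion {x y : ℤ} (hxy : x ≠ y) {h : WordHead}
    (hmem : (0, x, 0, y) ∈ pingPongRegion (0, x, 0, y) h) : h = .empty := by
  cases h with
  | empty => rfl
  | inl | inr =>
    simp only [pingPongRegion, XSigma, XPlus, XMinus, rhoMap, mem_preimage, mem_union,
      mem_singleton_iff, mem_ofPred_eq, Prod.mk.injEq] at hmem
    omega

/-- For distinct positive integers `x` and `y`, the only element of
`VB₂ ≅ ℤ * (ℤ/2ℤ)` that fixes the vector `(0,x,0,y) ∈ ℤ⁴` (under the action
sending the generator of `ℤ` to `σ` and the generator of `ℤ/2ℤ` to `ρ`) is the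
trivial one. -/
theorem VB2_stabilizer_trivial (x y : ℤ) (hx : 0 < x) (hy : 0 < y) (hxy : x ≠ y)
    (φ : Monoid.Coprod (Multiplicative ℤ) (Multiplicative (ZMod 2)) →*
        Equiv.Perm (ℤ × ℤ × ℤ × ℤ))
    (hσ : ∀ v, φ (Monoid.Coprod.inl (Multiplicative.ofAdd (1 : ℤ))) v = sigmaMap v)
    (hρ : ∀ v, φ (Monoid.Coprod.inr (Multiplicative.ofAdd (1 : ZMod 2))) v = rhoMap v)
    (g : Monoid.Coprod (Multiplicative ℤ) (Multiplicative (ZMod 2)))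
    (hg : φ g (0, x, 0, y) = (0, x, 0, y)) :
    g = 1 := by
  obtain ⟨h, hw⟩ := exists_reducedWord g
  have hmem := apply_mem_pingPongRegion φ hσ hρ (mem_XRho hx hy) (mem_XRho hy hx) hw
  rw [hg] at hmem
  obtain rfl := eq_empty_of_mem_pingPongRegion hxy hmem
  exact hw.eq_one
end

section
/- The region (-,-,+0,+) is preserved by σ⁻¹: for all integers a < 0, b < 0, c ≥ 0, d > 0, one has (a,b,c,d)·σ⁻¹ = (a, a+b-c, c, -a+c+d), and this image again satisfies: first coordinate negative, second coordinate negative, third coordinate nonnegative, fourth coordinate positive. -/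
/-- The region `(-,-,+0,+)` is preserved by `σ⁻¹`: for `a < 0`, `b < 0`, `c ≥ 0`,
`d > 0`, one has `(a,b,c,d)·σ⁻¹ = (a, a+b-c, c, -a+c+d)`, which again lies
in `(-,-,+0,+)`. -/
theorem sigmaInv_preserves_region_nnp0p (a b c d : ℤ)
    (ha : a < 0) (hb : b < 0) (hc : 0 ≤ c) (hd : 0 < d) :
    sigmaInvMap (a, b, c, d) = (a, a + b - c, c, -a + c + d) ∧
    (sigmaInvMap (a, b, c, d)).1 < 0 ∧
    (sigmaInvMap (a, b, c, d)).2.1 < 0 ∧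
    0 ≤ (sigmaInvMap (a, b, c, d)).2.2.1 ∧
    0 < (sigmaInvMap (a, b, c, d)).2.2.2 := by
  simp only [sigmaInvMap, pPart, nPart, Prod.mk.injEq]
  omega
end

section
/- The σ-action strictly increases the norm on the region (-0,+,+,-): for all integers a ≤ 0, b > 0, c > 0, d < 0, writing ‖(a,b,c,d)‖ = |a| + |b| + |c| + |d|, one has ‖(a,b,c,d)·σ‖ > ‖(a,b,c,d)‖. -/
/-- The norm of a quadruple: `‖(a,b,c,d)‖ = |a| + |b| + |c| + |d|`. -/
def qNorm : ℤ × ℤ × ℤ × ℤ → ℤ :=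
  fun (a, b, c, d) => |a| + |b| + |c| + |d|

/-- The `σ`-action strictly increases the norm on the region `(-0,+,+,-)`. -/
theorem sigma_increases_norm_on_region_n0ppn (a b c d : ℤ)
    (ha : a ≤ 0) (hb : 0 < b) (hc : 0 < c) (hd : d < 0) :
    qNorm (a, b, c, d) < qNorm (sigmaMap (a, b, c, d)) := by
  simp only [sigmaMap, qNorm, pPart, nPart, abs]
  omega
end
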